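/- Let R be a ring, θ an additive invariant on finite-length R-modules, and T a finite-length R-module. Let X' ⊆ T be the submodule with X' in 𝓘_θ and T/X' in 𝓟̄_θ (T_θ^min), and X'' ⊆ T the submodule with X'' in 𝓘̄_θ and T/X'' in 𝓟_θ (T_θ^max). Then θ(X') = θ(X''), and θ(X) ≤ θ(X') for every submodule X ⊆ T; moreover, equality θ(X) = θ(X') holds if and only if X' ⊆ X ⊆ X'' and X/X' is θ-semistable. -/

import Mathlib

universe u

/-- An *additive invariant* on finite-length modules over a ring `R`: an assignment of a real
number to every module (whose value is only constrained on finite-length modules) that is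
invariant under isomorphism and additive in short exact sequences. -/
structure AdditiveInvariant (R : Type u) [Ring R] where
  /-- The value of the invariant on a module. -/
  val : (M : Type u) → [AddCommGroup M] → [Module R M] → ℝ
  /-- Isomorphism invariance on finite-length modules. -/
  iso_inv : ∀ (M N : Type u) [AddCommGroup M] [Module R M] [AddCommGroup N] [Module R N],
    IsFiniteLength R M → (M ≃ₗ[R] N) → val M = val N
  /-- Additivity with respect to submodules and quotients, on finite-length modules. -/
  additive : ∀ (M : Type u) [AddCommGroup M] [Module R M], IsFiniteLength R M →
    ∀ N : Submodule R M, val M = val N + val (M ⧸ N)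

variable {R : Type u} [Ring R]

/-- `M` lies in `𝓘_θ`: every nonzero quotient `Q` of `M` satisfies `θ(Q) > 0`. -/
def MemI (θ : AdditiveInvariant R) (M : Type u) [AddCommGroup M] [Module R M] : Prop :=
  ∀ N : Submodule R M, N ≠ ⊤ → 0 < θ.val (M ⧸ N)

/-- `M` lies in `𝓘̄_θ`: every nonzero quotient `Q` of `M` satisfies `θ(Q) ≥ 0`. -/
def MemIbar (θ : AdditiveInvariant R) (M : Type u) [AddCommGroup M] [Module R M] : Prop :=
  ∀ N : Submodule R M, N ≠ ⊤ → 0 ≤ θ.val (M ⧸ N)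

/-- `M` lies in `𝓟_θ`: every nonzero submodule `X` of `M` satisfies `θ(X) < 0`. -/
def MemP (θ : AdditiveInvariant R) (M : Type u) [AddCommGroup M] [Module R M] : Prop :=
  ∀ X : Submodule R M, X ≠ ⊥ → θ.val X < 0

/-- `M` lies in `𝓟̄_θ`: every nonzero submodule `X` of `M` satisfies `θ(X) ≤ 0`. -/
def MemPbar (θ : AdditiveInvariant R) (M : Type u) [AddCommGroup M] [Module R M] : Prop :=
  ∀ X : Submodule R M, X ≠ ⊥ → θ.val X ≤ 0

/-- `M` is `θ`-semistable: `θ(M) = 0` and every submodule `X` of `M` satisfies `θ(X) ≤ 0`. -/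
def Semistable (θ : AdditiveInvariant R) (M : Type u) [AddCommGroup M] [Module R M] : Prop :=
  θ.val M = 0 ∧ ∀ X : Submodule R M, θ.val X ≤ 0

/-!
Comparing a submodule `X ⊆ T` with `Y` through `X ⊓ Y` gives
`θ(X) + θ(Y / (X ⊓ Y)) = θ(Y) + θ((X + Y) / Y)`. If `Y ∈ 𝓘̄_θ` and `T/Y ∈ 𝓟̄_θ`, the second
term on the left is `≥ 0` and the one on the right is `≤ 0`, so `θ(X) ≤ θ(Y)`; with `𝓘_θ`
(resp. `𝓟_θ`) the inequality is strict unless `Y ⊆ X` (resp. `X ⊆ Y`). For `Y = X'` and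
`Y = X''` this shows that both maximise `θ`, and that a maximiser `X` satisfies
`X' ⊆ X ⊆ X''`. Then `θ(X/X') = 0`, and `X/X'` embeds into `T/X' ∈ 𝓟̄_θ`, so it is semistable.
-/

open Submodule

section Invariant

variable {M N : Type u} [AddCommGroup M] [Module R M] [AddCommGroup N] [Module R N]
  {θ : AdditiveInvariant R}

namespace AdditiveInvariant

variable (θ)

theorem val_eq_zero_of_subsingleton [Subsingleton M] : θ.val M = 0 := by
  have h := θ.additive M .of_subsingleton ⊥
  rw [θ.iso_inv (⊥ : Submodule R M) M .of_subsingleton (.ofSubsingleton _ _),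
    θ.iso_inv (M ⧸ (⊥ : Submodule R M)) M .of_subsingleton (.ofSubsingleton _ _)] at h
  linarith

theorem val_eq_val_inf_add_val_quotient (hM : IsFiniteLength R M) (p q : Submodule R M) :
    θ.val q = θ.val ↥(p ⊓ q) + θ.val (q ⧸ p.comap q.subtype) := by
  have hq : IsFiniteLength R q := hM.of_injective q.injective_subtype
  have hpq : p.comap q.subtype = (p ⊓ q).comap q.subtype := by
    rw [comap_inf, comap_subtype_self, inf_top_eq]
  rw [θ.additive q hq (p.comap q.subtype),
    θ.iso_inv _ _ (hq.of_injective (injective_subtype _))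
      ((LinearEquiv.ofEq _ _ hpq).trans (comapSubtypeEquivOfLe inf_le_right))]

theorem val_eq_val_add_val_quotient_of_le (hM : IsFiniteLength R M) {p q : Submodule R M}
    (h : p ≤ q) : θ.val q = θ.val p + θ.val (q ⧸ p.comap q.subtype) := by
  rw [θ.val_eq_val_inf_add_val_quotient hM p q, inf_eq_left.mpr h]

theorem val_eq_val_inf_add_val_map_mkQ (hM : IsFiniteLength R M) (p q : Submodule R M) :
    θ.val p = θ.val ↥(q ⊓ p) + θ.val ↥(p.map q.mkQ) := by
  have hp : IsFiniteLength R p := hM.of_injective p.injective_subtype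
  have hker : q.comap p.subtype = LinearMap.ker (q.mkQ ∘ₗ p.subtype) := by
    rw [LinearMap.ker_comp, ker_mkQ]
  have hrange : LinearMap.range (q.mkQ ∘ₗ p.subtype) = p.map q.mkQ := by
    rw [LinearMap.range_comp, range_subtype]
  rw [θ.val_eq_val_inf_add_val_quotient hM q p,
    θ.iso_inv _ _ (hp.of_surjective (mkQ_surjective _))
      ((quotEquivOfEq _ _ hker).trans
        ((q.mkQ ∘ₗ p.subtype).quotKerEquivRange.trans (.ofEq _ _ hrange)))]

theorem val_add_val_quotient_eq_val_add_val_map_mkQ (hM : IsFiniteLength R M)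
    (X Y : Submodule R M) :
    θ.val X + θ.val (Y ⧸ X.comap Y.subtype) = θ.val Y + θ.val ↥(X.map Y.mkQ) := by
  rw [θ.val_eq_val_inf_add_val_quotient hM X Y, θ.val_eq_val_inf_add_val_map_mkQ hM X Y,
    inf_comm]
  ring

end AdditiveInvariant

theorem MemI.memIbar (h : MemI θ M) : MemIbar θ M := fun N hN => (h N hN).le

theorem MemP.memPbar (h : MemP θ M) : MemPbar θ M := fun X hX => (h X hX).le

theorem MemIbar.val_quotient_nonneg (h : MemIbar θ M) (N : Submodule R M) :
    0 ≤ θ.val (M ⧸ N) := by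
  rcases eq_or_ne N ⊤ with rfl | hN
  · exact (θ.val_eq_zero_of_subsingleton).ge
  · exact h N hN

theorem MemPbar.val_nonpos (h : MemPbar θ M) (X : Submodule R M) : θ.val X ≤ 0 := by
  rcases eq_or_ne X ⊥ with rfl | hX
  · exact (θ.val_eq_zero_of_subsingleton).le
  · exact h X hX

theorem MemPbar.of_injective (hM : IsFiniteLength R M) (h : MemPbar θ M) {f : N →ₗ[R] M}
    (hf : Function.Injective f) : MemPbar θ N := by
  intro X hX
  rw [← θ.iso_inv _ _ (hM.of_injective (injective_subtype _))
    (X.equivMapOfInjective f hf).symm]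
  exact h _ (by simpa using (map_injective_of_injective hf).ne hX)

section Comparison

variable (hM : IsFiniteLength R M) {Y : Submodule R M}
include hM

theorem val_le_of_memIbar_of_memPbar (hI : MemIbar θ Y) (hP : MemPbar θ (M ⧸ Y))
    (X : Submodule R M) : θ.val X ≤ θ.val Y := by
  have := θ.val_add_val_quotient_eq_val_add_val_map_mkQ hM X Y
  linarith [hI.val_quotient_nonneg (X.comap Y.subtype), hP.val_nonpos (X.map Y.mkQ)]

theorem val_lt_of_memI_of_memPbar (hI : MemI θ Y) (hP : MemPbar θ (M ⧸ Y))
    {X : Submodule R M} (hYX : ¬ Y ≤ X) : θ.val X < θ.val Y := by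
  have := θ.val_add_val_quotient_eq_val_add_val_map_mkQ hM X Y
  have hpos := hI (X.comap Y.subtype) (comap_subtype_eq_top.not.mpr hYX)
  linarith [hP.val_nonpos (X.map Y.mkQ)]

theorem val_lt_of_memIbar_of_memP (hI : MemIbar θ Y) (hP : MemP θ (M ⧸ Y))
    {X : Submodule R M} (hXY : ¬ X ≤ Y) : θ.val X < θ.val Y := by
  have := θ.val_add_val_quotient_eq_val_add_val_map_mkQ hM X Y
  have hmap : X.map Y.mkQ ≠ ⊥ := by
    rwa [ne_eq, ← le_bot_iff, map_le_iff_le_comap, comap_bot, ker_mkQ]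
  linarith [hI.val_quotient_nonneg (X.comap Y.subtype), hP _ hmap]

theorem semistable_quotient_of_val_eq (hP : MemPbar θ (M ⧸ Y)) {X : Submodule R M}
    (hYX : Y ≤ X) (heq : θ.val X = θ.val Y) : Semistable θ (X ⧸ Y.comap X.subtype) := by
  have hinj : Function.Injective ((Y.comap X.subtype).mapQ Y X.subtype le_rfl) := by
    rw [← LinearMap.ker_eq_bot, ker_mapQ, mkQ_map_self]
  refine ⟨?_, (hP.of_injective (hM.of_surjective (mkQ_surjective Y)) hinj).val_nonpos⟩
  linarith [θ.val_eq_val_add_val_quotient_of_le hM hYX]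

end Comparison

end Invariant

/-- **Proposition (Proposition `pr:TminTmax`).** Let `X' = T_θ^min` (i.e. `X' ∈ 𝓘_θ` and
`T/X' ∈ 𝓟̄_θ`) and `X'' = T_θ^max` (i.e. `X'' ∈ 𝓘̄_θ` and `T/X'' ∈ 𝓟_θ`). Then
`θ(X') = θ(X'')`, every submodule `X ⊆ T` satisfies `θ(X) ≤ θ(X')`, and equality holds
if and only if `X' ⊆ X ⊆ X''` and `X/X'` is `θ`-semistable. -/
theorem theta_min_max (R : Type u) [Ring R] (θ : AdditiveInvariant R)
    (T : Type u) [AddCommGroup T] [Module R T] (hT : IsFiniteLength R T)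
    (X' X'' : Submodule R T)
    (hX'I : MemI θ X') (hX'P : MemPbar θ (T ⧸ X'))
    (hX''I : MemIbar θ X'') (hX''P : MemP θ (T ⧸ X'')) :
    θ.val X' = θ.val X'' ∧
    ∀ X : Submodule R T,
      θ.val X ≤ θ.val X' ∧
      (θ.val X = θ.val X' ↔
        X' ≤ X ∧ X ≤ X'' ∧ Semistable θ (X ⧸ Submodule.comap X.subtype X')) := by
  have hle := val_le_of_memIbar_of_memPbar hT hX'I.memIbar hX'P
  have heq : θ.val X' = θ.val X'' :=
    le_antisymm (val_le_of_memIbar_of_memPbar hT hX''I hX''P.memPbar X') (hle X'')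
  refine ⟨heq, fun X => ⟨hle X, fun hX => ?_, fun ⟨hX'X, _, hss⟩ => ?_⟩⟩
  · have hX'X : X' ≤ X := by
      by_contra h
      exact (val_lt_of_memI_of_memPbar hT hX'I hX'P h).ne hX
    have hXX'' : X ≤ X'' := by
      by_contra h
      exact (val_lt_of_memIbar_of_memP hT hX''I hX''P h).ne (hX.trans heq)
    exact ⟨hX'X, hXX'', semistable_quotient_of_val_eq hT hX'P hX'X hX⟩
  · rw [θ.val_eq_val_add_val_quotient_of_le hT hX'X, hss.1, add_zero]
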